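/- arXiv:2502.05811 — 7 statements merged into one kernel-verified Lean document; each statement's English description precedes it below -/
import Mathlib

section
/- For an affine map T(z) = az + b with a ≠ 0, a polynomial f, λ ≠ 0, and g(z) = λ·f(T(z)), the conjugated Stirling map satisfies T(St_g(T⁻¹(z))) = z - f(z)/f'(z - aλ·f(z)) at every point where the expressions are defined. -/
section Stirling

variable {𝕜 : Type*} [NontriviallyNormedField 𝕜]

noncomputable def stirling (f : 𝕜 → 𝕜) (z : 𝕜) : 𝕜 :=
  z - f z / deriv f (z - f z)

/- No differentiability is needed: for `a ≠ 0` the affine change of variables is invertible, so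
both sides are the junk value `0` at the same points, and for `a = 0` both sides vanish. -/
theorem deriv_const_mul_comp_affine (f : 𝕜 → 𝕜) (l a b w : 𝕜) :
    deriv (fun z => l * f (a * z + b)) w = l * a * deriv f (a * w + b) := by
  have hscale := deriv_comp_mul_left a (fun y => f (y + b)) w
  simp only [deriv_comp_add_const, smul_eq_mul] at hscale
  rw [deriv_const_mul_field, hscale, mul_assoc]

theorem stirling_const_mul_comp_affine_conj (f : 𝕜 → 𝕜) {a l : 𝕜} (ha : a ≠ 0)
    (hl : l ≠ 0) (b z : 𝕜) :
    a * stirling (fun z => l * f (a * z + b)) ((z - b) / a) + b =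
      z - f z / deriv f (z - a * l * f z) := by
  have hT : ∀ w, a * ((w - b) / a) + b = w := fun w => by field_simp; ring
  have harg : a * ((z - b) / a - l * f z) + b = z - a * l * f z := by
    rw [mul_sub, sub_add_eq_add_sub, hT, mul_assoc]
  rw [stirling, deriv_const_mul_comp_affine, hT, harg, mul_sub, sub_add_eq_add_sub, hT,
    mul_assoc l, mul_div_mul_left _ _ hl, mul_div_assoc', mul_div_mul_left _ _ ha]

end Stirling

/-- For `T z = a z + b` (`a ≠ 0`), a polynomial `f` (as `p`), `λ ≠ 0` and
`g z = λ · f (T z)`, the conjugated Stirling map satisfies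
`T (St_g (T⁻¹ z)) = z - f z / f' (z - a λ f z)` wherever defined. -/
theorem stirling_conjugation_formula (p : Polynomial ℂ) (a b l : ℂ) (ha : a ≠ 0)
    (hl : l ≠ 0) :
    let g : ℂ → ℂ := fun z => l * p.eval (a * z + b)
    let Stg : ℂ → ℂ := fun z => z - g z / deriv g (z - g z)
    ∀ z : ℂ, p.derivative.eval (z - a * l * p.eval z) ≠ 0 →
      a * Stg ((z - b) / a) + b =
        z - p.eval z / p.derivative.eval (z - a * l * p.eval z) := by
  intro g Stg z _
  show a * stirling g ((z - b) / a) + b = _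
  simpa only [Polynomial.deriv] using
    stirling_const_mul_comp_affine_conj (fun x => p.eval x) ha hl b z
end

section
/- Let R = P/Q be a rational function with P, Q coprime polynomials, Q ≢ 0, and let z₀ be a simple zero of P (so P(z₀) = 0, P'(z₀) ≠ 0, Q(z₀) ≠ 0). Then z₀ is a superattracting fixed point of Stirling's method St_R, i.e., St_R(z₀) = z₀ and St_R'(z₀) = 0. -/
/-!
At a simple zero `z₀` of `R` the inner point `z - R z` of Stirling's map returns to `z₀`, so
`St_R z₀ = z₀` and the denominator `R'(z - R z)` equals `R'(z₀)` there. Since `R(z₀) = 0`, the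
quotient rule gives `(R / R' ∘ (id - R))'(z₀) = R'(z₀) / R'(z₀) = 1`, hence `St_R'(z₀) = 0`.
A rational function `P / Q` with `Q(z₀) ≠ 0` is analytic at `z₀`, so `R'` is differentiable there
and `R'(z₀) = P'(z₀) / Q(z₀) ≠ 0`.
-/

open Polynomial

section Stirling

variable {𝕜 : Type*} [NontriviallyNormedField 𝕜] {f g R : 𝕜 → 𝕜} {z₀ : 𝕜}

theorem deriv_div_of_eq_zero (hf : DifferentiableAt 𝕜 f z₀) (hg : DifferentiableAt 𝕜 g z₀)
    (hg0 : g z₀ ≠ 0) (hf0 : f z₀ = 0) :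
    deriv (fun z => f z / g z) z₀ = deriv f z₀ / g z₀ := by
  rw [deriv_fun_div hf hg hg0, hf0, zero_mul, sub_zero, sq, mul_div_mul_right _ _ hg0]

theorem stirling_eq_self_of_eq_zero (hR0 : R z₀ = 0) :
    z₀ - R z₀ / deriv R (z₀ - R z₀) = z₀ := by
  simp [hR0]

theorem deriv_stirling_eq_zero (hR0 : R z₀ = 0) (hR' : deriv R z₀ ≠ 0)
    (hR'' : DifferentiableAt 𝕜 (deriv R) z₀) :
    deriv (fun z => z - R z / deriv R (z - R z)) z₀ = 0 := by
  have hR : DifferentiableAt 𝕜 R z₀ := differentiableAt_of_deriv_ne_zero hR'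
  have hinner : z₀ - R z₀ = z₀ := by rw [hR0, sub_zero]
  have hdenom : DifferentiableAt 𝕜 (fun z => deriv R (z - R z)) z₀ := by
    refine DifferentiableAt.comp (g := deriv R) z₀ ?_ (differentiableAt_fun_id.fun_sub hR)
    rwa [hinner]
  have hdenom0 : deriv R (z₀ - R z₀) ≠ 0 := by rwa [hinner]
  have hquot : deriv (fun z => R z / deriv R (z - R z)) z₀ = 1 := by
    rw [deriv_div_of_eq_zero hR hdenom hdenom0 hR0, hinner, div_self hR']
  rw [deriv_fun_sub differentiableAt_fun_id (hR.fun_div hdenom hdenom0), hquot, deriv_id'', sub_self]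

end Stirling

section RationalFunction

variable {𝕜 : Type*} [NontriviallyNormedField 𝕜] {P Q : 𝕜[X]} {z₀ : 𝕜}

theorem analyticAt_eval_div_eval (hQ0 : Q.eval z₀ ≠ 0) :
    AnalyticAt 𝕜 (fun z => P.eval z / Q.eval z) z₀ :=
  (AnalyticOnNhd.eval_polynomial P z₀ (Set.mem_univ _)).fun_div
    (AnalyticOnNhd.eval_polynomial Q z₀ (Set.mem_univ _)) hQ0

theorem deriv_eval_div_eval_of_eval_eq_zero (hP0 : P.eval z₀ = 0) (hQ0 : Q.eval z₀ ≠ 0) :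
    deriv (fun z => P.eval z / Q.eval z) z₀ = P.derivative.eval z₀ / Q.eval z₀ := by
  rw [deriv_div_of_eq_zero P.differentiableAt Q.differentiableAt hQ0 hP0, Polynomial.deriv]

end RationalFunction

theorem stirling_simple_zero_superattracting_general (P Q : Polynomial ℂ)
    (z₀ : ℂ) (hP0 : P.eval z₀ = 0)
    (hP' : P.derivative.eval z₀ ≠ 0) (hQ0 : Q.eval z₀ ≠ 0) :
    let R : ℂ → ℂ := fun z => P.eval z / Q.eval z
    let St : ℂ → ℂ := fun z => z - R z / deriv R (z - R z)
    St z₀ = z₀ ∧ deriv St z₀ = 0 := by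
  intro R St
  have hR0 : R z₀ = 0 := by simp [R, hP0]
  have hR' : deriv R z₀ ≠ 0 := by
    rw [deriv_eval_div_eval_of_eval_eq_zero hP0 hQ0]
    exact div_ne_zero hP' hQ0
  have hR'' : DifferentiableAt ℂ (deriv R) z₀ :=
    (analyticAt_eval_div_eval hQ0).deriv.differentiableAt
  exact ⟨stirling_eq_self_of_eq_zero hR0, deriv_stirling_eq_zero hR0 hR' hR''⟩

/-- A simple zero `z₀` of a rational function `R = P/Q` is a superattracting
fixed point of Stirling's method `St_R`. -/
theorem stirling_simple_zero_superattracting (P Q : Polynomial ℂ)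
    (hco : IsCoprime P Q) (hQ : Q ≠ 0) (z₀ : ℂ) (hP0 : P.eval z₀ = 0)
    (hP' : P.derivative.eval z₀ ≠ 0) (hQ0 : Q.eval z₀ ≠ 0) :
    let R : ℂ → ℂ := fun z => P.eval z / Q.eval z
    let St : ℂ → ℂ := fun z => z - R z / deriv R (z - R z)
    St z₀ = z₀ ∧ deriv St z₀ = 0 :=
  stirling_simple_zero_superattracting_general P Q z₀ hP0 hP' hQ0
end

section
/- Let P(z) = a₀ + a₁z + ⋯ + aₙzⁿ be a polynomial of degree n ≥ 2 with aₙ ≠ 0, and let H(z) = 1/St_P(1/z) be the conjugation of Stirling's method by z ↦ 1/z. Then H(0) = 0 and H'(0) = 1; i.e., ∞ is a fixed point of St_P with multiplier 1 (rationally indifferent). -/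
open Polynomial Finset

noncomputable def stQ (P : Polynomial ℂ) (n : ℕ) (z : ℂ) : ℂ :=
  ∑ i ∈ Finset.range (n+1), P.coeff i * z ^ (n - i)

noncomputable def stR (P : Polynomial ℂ) (n : ℕ) (z : ℂ) : ℂ :=
  z ^ (n-1) - stQ P n z

noncomputable def stS (P : Polynomial ℂ) (n : ℕ) (z : ℂ) : ℂ :=
  ∑ j ∈ Finset.range n, P.derivative.coeff j * (stR P n z) ^ j * z ^ (n * (n-1-j))

noncomputable def stD (P : Polynomial ℂ) (n : ℕ) (z : ℂ) : ℂ :=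
  stS P n z - z ^ (n * (n-2) + 1) * stQ P n z

lemma stQ_analytic (P : Polynomial ℂ) (n : ℕ) (x : ℂ) : AnalyticAt ℂ (stQ P n) x := by
  apply Finset.analyticAt_fun_sum
  intro i _
  exact analyticAt_const.mul ((analyticAt_id).pow _)

lemma stR_analytic (P : Polynomial ℂ) (n : ℕ) (x : ℂ) : AnalyticAt ℂ (stR P n) x :=
  ((analyticAt_id).pow _).sub (stQ_analytic P n x)

lemma stS_analytic (P : Polynomial ℂ) (n : ℕ) (x : ℂ) : AnalyticAt ℂ (stS P n) x := by
  apply Finset.analyticAt_fun_sum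
  intro j _
  exact (analyticAt_const.mul ((stR_analytic P n x).pow _)).mul ((analyticAt_id).pow _)

lemma stD_analytic (P : Polynomial ℂ) (n : ℕ) (x : ℂ) : AnalyticAt ℂ (stD P n) x :=
  (stS_analytic P n x).sub (((analyticAt_id).pow _).mul (stQ_analytic P n x))

lemma stQ_zero (P : Polynomial ℂ) (n : ℕ) : stQ P n 0 = P.coeff n := by
  rw [stQ, Finset.sum_eq_single n]
  · simp
  · intro i hi hne
    rw [Finset.mem_range] at hi
    rw [zero_pow (by omega), mul_zero]
  · intro h
    exact absurd (Finset.self_mem_range_succ n) h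

lemma stS_zero (P : Polynomial ℂ) (n : ℕ) (hn : 2 ≤ n) :
    stS P n 0 = (P.coeff n * n) * (-P.coeff n) ^ (n-1) := by
  rw [stS, Finset.sum_eq_single (n-1)]
  · have h1 : stR P n 0 = -P.coeff n := by
      rw [stR, stQ_zero, zero_pow (by omega), zero_sub]
    have h2 : (P.derivative).coeff (n-1) = P.coeff n * n := by
      rw [coeff_derivative, show n-1+1 = n from by omega,
        Nat.cast_sub (by omega : 1 ≤ n)]
      push_cast
      ring
    rw [h1, h2, Nat.sub_self, mul_zero, pow_zero, mul_one]
  · intro j hj hne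
    rw [Finset.mem_range] at hj
    rw [zero_pow (Nat.mul_ne_zero (by omega) (by omega)), mul_zero]
  · intro h
    exact absurd (Finset.mem_range.mpr (by omega)) h

lemma stD_zero (P : Polynomial ℂ) (n : ℕ) : stD P n 0 = stS P n 0 := by
  rw [stD, zero_pow (Nat.succ_ne_zero _), zero_mul, sub_zero]

lemma stS_zero_ne (P : Polynomial ℂ) (hn : 2 ≤ P.natDegree) : stS P P.natDegree 0 ≠ 0 := by
  have hP0 : P ≠ 0 := fun h => by simp [h] at hn
  have ha : P.coeff P.natDegree ≠ 0 := by
    have h := Polynomial.leadingCoeff_ne_zero.mpr hP0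
    rwa [Polynomial.leadingCoeff] at h
  rw [stS_zero P _ hn]
  refine mul_ne_zero (mul_ne_zero ha ?_) (pow_ne_zero _ (neg_ne_zero.mpr ha))
  simp only [Ne, Nat.cast_eq_zero]
  omega

lemma stQ_eval (P : Polynomial ℂ) {n : ℕ} (hd : n = P.natDegree) {z : ℂ} (hz : z ≠ 0) :
    P.eval (1/z) = stQ P n z / z ^ n := by
  rw [eval_eq_sum_range' (by omega : P.natDegree < n + 1), stQ, Finset.sum_div]
  apply Finset.sum_congr rfl
  intro i hi
  rw [Finset.mem_range] at hi
  rw [mul_div_assoc]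
  congr 1
  rw [div_pow, one_pow, div_eq_div_iff (pow_ne_zero _ hz) (pow_ne_zero _ hz),
    one_mul, ← pow_add]
  congr 1
  omega

lemma stS_eval (P : Polynomial ℂ) {n : ℕ} (hd : n = P.natDegree) (hn : 2 ≤ n) {z : ℂ}
    (hz : z ≠ 0) :
    P.derivative.eval (stR P n z / z ^ n) = stS P n z / z ^ (n * (n-1)) := by
  have hdl : P.derivative.natDegree < n := by
    have := Polynomial.natDegree_derivative_lt (p := P) (by omega)
    omega
  rw [eval_eq_sum_range' hdl, stS, Finset.sum_div]
  apply Finset.sum_congr rfl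
  intro j hj
  rw [Finset.mem_range] at hj
  rw [div_pow, ← pow_mul, mul_assoc, mul_div_assoc]
  congr 1
  rw [div_eq_div_iff (pow_ne_zero _ hz) (pow_ne_zero _ hz), mul_assoc, ← pow_add,
    ← Nat.mul_add, show n-1-j+j = n-1 from by omega]


lemma st_key (P : Polynomial ℂ) {n : ℕ} (hd : n = P.natDegree) (hn : 2 ≤ n) {z : ℂ}
    (hz : z ≠ 0) (hS : stS P n z ≠ 0) :
    1 / ((1 / z) - P.eval (1 / z) / P.derivative.eval ((1 / z) - P.eval (1 / z)))
      = z * (stS P n z / stD P n z) := by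
  have hQ := stQ_eval P hd hz
  have hRz : 1/z - P.eval (1/z) = stR P n z / z ^ n := by
    rw [hQ, stR, sub_div]
    congr 1
    rw [div_eq_div_iff hz (pow_ne_zero _ hz), one_mul, ← pow_succ]
    congr 1
    omega
  rw [hRz, stS_eval P hd hn hz, hQ]
  have hinner : 1/z - (stQ P n z / z ^ n) / (stS P n z / z ^ (n*(n-1)))
      = stD P n z / (z * stS P n z) := by
    rw [div_div_div_eq, show n*(n-1) = n*(n-2) + n from by
        rw [show n-1 = (n-2)+1 from by omega, Nat.mul_add, mul_one],
      pow_add, stD]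
    field_simp
    ring
  rw [hinner, one_div_div]
  ring

/-- For a polynomial `P` of degree `n ≥ 2`, `∞` is a fixed point of Stirling's
method `St_P` with multiplier `1`: the conjugation `H z = 1 / St_P (1/z)`
extends analytically through `0` with `H 0 = 0` and `H' 0 = 1`. -/
theorem stirling_infinity_rationally_indifferent (P : Polynomial ℂ)
    (hn : 2 ≤ P.natDegree) :
    ∃ H : ℂ → ℂ, AnalyticAt ℂ H 0 ∧
      H =ᶠ[nhdsWithin 0 {(0 : ℂ)}ᶜ]
        (fun z => 1 / ((1 / z) - P.eval (1 / z) /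
          P.derivative.eval ((1 / z) - P.eval (1 / z)))) ∧
      H 0 = 0 ∧ deriv H 0 = 1 := by
  set n := P.natDegree with hd
  have hS0 : stS P n 0 ≠ 0 := stS_zero_ne P hn
  have hD0 : stD P n 0 ≠ 0 := by rw [stD_zero]; exact hS0
  have hg_an : AnalyticAt ℂ (fun z => stS P n z / stD P n z) 0 :=
    (stS_analytic P n 0).div (stD_analytic P n 0) hD0
  refine ⟨fun z => z * (stS P n z / stD P n z), (analyticAt_id).mul hg_an, ?_, by simp, ?_⟩
  · have hev : ∀ᶠ z in nhds (0:ℂ), stS P n z ≠ 0 :=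
      (stS_analytic P n 0).continuousAt.eventually_ne hS0
    filter_upwards [nhdsWithin_le_nhds hev, self_mem_nhdsWithin] with z hSz hz
    exact (st_key P hd hn hz hSz).symm
  · have hgd := hg_an.differentiableAt.hasDerivAt
    have h1 : HasDerivAt (fun z : ℂ => z * (stS P n z / stD P n z))
        (1 * (stS P n 0 / stD P n 0) + 0 * _) 0 := (hasDerivAt_id 0).mul hgd
    rw [h1.deriv, one_mul, zero_mul, add_zero, stD_zero, div_self hS0]
end

section
/- Let M(z) = b/(cz+d) with b, c ≠ 0, and let g(z) = 1/St_M(1/z) be the conjugation of Stirling's method by inversion. Then g(0) = 0 and g'(0) = 1/2; i.e., ∞ is an attracting (but not superattracting) fixed point of St_M with multiplier 1/2. -/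
/-!
Writing `w = 1/z`, the closed form `St_M(w) = w + ((cw+d)² - bc)²/(c(cw+d)³)` becomes
`St_M(1/z) = B(z)/A(z)` with `A(z) = z · c(c+dz)³` and
`B(z) = c(c+dz)³ + ((c+dz)² - bcz²)²`. Hence `g(z) = z · φ(z)` with `φ = c(c+dz)³/B`
analytic near `0` and `φ(0) = c⁴/(2c⁴) = 1/2`, which is the multiplier.
-/

open Filter Topology

lemma deriv_div_linear (b c d w : ℂ) (hw : c * w + d ≠ 0) :
    deriv (fun z : ℂ => b / (c * z + d)) w = -(b * c) / (c * w + d) ^ 2 := by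
  have hlin : HasDerivAt (fun z : ℂ => c * z + d) c w := by
    simpa using ((hasDerivAt_id w).const_mul c).add_const d
  exact ((hasDerivAt_const w b).div hlin hw).deriv.trans (by ring)

lemma stirling_div_linear {b c d w : ℂ} (hb : b ≠ 0) (hw : c * w + d ≠ 0)
    (hq : (c * w + d) ^ 2 - b * c ≠ 0) :
    w - b / (c * w + d) / deriv (fun z : ℂ => b / (c * z + d)) (w - b / (c * w + d)) =
      w + ((c * w + d) ^ 2 - b * c) ^ 2 / (c * (c * w + d) ^ 3) := by
  have hstep : c * (w - b / (c * w + d)) + d = ((c * w + d) ^ 2 - b * c) / (c * w + d) := by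
    field_simp
    ring
  rw [deriv_div_linear _ _ _ _ (hstep ▸ div_ne_zero hq hw), hstep]
  by_cases hc : c = 0
  · simp [hc]
  field_simp
  ring

lemma one_div_stirling_div_linear_inv {b c d z : ℂ} (hb : b ≠ 0) (hc : c ≠ 0) (hz : z ≠ 0)
    (hP : c + d * z ≠ 0) (hQ : (c + d * z) ^ 2 - b * c * z ^ 2 ≠ 0) :
    1 / (1 / z - b / (c * (1 / z) + d) /
        deriv (fun w : ℂ => b / (c * w + d)) (1 / z - b / (c * (1 / z) + d))) =
      z * (c * (c + d * z) ^ 3 / (c * (c + d * z) ^ 3 + ((c + d * z) ^ 2 - b * c * z ^ 2) ^ 2)) := by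
  have hw : c * (1 / z) + d = (c + d * z) / z := by field_simp
  have hq : (c * (1 / z) + d) ^ 2 - b * c = ((c + d * z) ^ 2 - b * c * z ^ 2) / z ^ 2 := by
    rw [hw]
    field_simp
  rw [stirling_div_linear hb (hw ▸ div_ne_zero hP hz) (hq ▸ div_ne_zero hQ (pow_ne_zero 2 hz)),
    hq, hw]
  generalize c + d * z = P at hP ⊢
  field_simp

/-- For `M z = b/(cz+d)` with `b, c ≠ 0`, the point `∞` is an attracting
(but not superattracting) fixed point of Stirling's method with multiplier
`1/2`: the conjugation `g z = 1/St_M(1/z)` extends analytically through `0`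
with `g 0 = 0` and `g' 0 = 1/2`. -/
theorem stirling_mobius_a_zero_infinity_attracting (b c d : ℂ) (hb : b ≠ 0)
    (hc : c ≠ 0) :
    let M : ℂ → ℂ := fun z => b / (c * z + d)
    let St : ℂ → ℂ := fun z => z - M z / deriv M (z - M z)
    ∃ g : ℂ → ℂ, AnalyticAt ℂ g 0 ∧
      g =ᶠ[nhdsWithin 0 {(0 : ℂ)}ᶜ] (fun z => 1 / St (1 / z)) ∧
      g 0 = 0 ∧ deriv g 0 = 1 / 2 := by
  intro M St
  set φ : ℂ → ℂ := fun z =>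
    c * (c + d * z) ^ 3 / (c * (c + d * z) ^ 3 + ((c + d * z) ^ 2 - b * c * z ^ 2) ^ 2)
  have hB0 : c * (c + d * 0) ^ 3 + ((c + d * 0) ^ 2 - b * c * 0 ^ 2) ^ 2 = 2 * c ^ 4 := by ring
  have hφ : AnalyticAt ℂ φ 0 :=
    AnalyticAt.div (by fun_prop) (by fun_prop) (by rw [hB0]; simp [hc])
  have hφ0 : φ 0 = 1 / 2 := by
    simp only [φ, hB0]
    field_simp
    ring
  refine ⟨fun z => z * φ z, analyticAt_id.mul hφ, ?_, by simp, ?_⟩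
  · have hP : ∀ᶠ z in 𝓝 (0 : ℂ), c + d * z ≠ 0 :=
      (show ContinuousAt (fun z : ℂ => c + d * z) 0 by fun_prop).eventually_ne (by simpa)
    have hQ : ∀ᶠ z in 𝓝 (0 : ℂ), (c + d * z) ^ 2 - b * c * z ^ 2 ≠ 0 :=
      (show ContinuousAt (fun z : ℂ => (c + d * z) ^ 2 - b * c * z ^ 2) 0 by fun_prop).eventually_ne
        (by simpa)
    filter_upwards [nhdsWithin_le_nhds hP, nhdsWithin_le_nhds hQ, self_mem_nhdsWithin]
      with z hPz hQz (hz : z ≠ 0)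
    exact (one_div_stirling_div_linear_inv hb hc hz hPz hQz).symm
  · have hg := (hasDerivAt_id (0 : ℂ)).mul hφ.differentiableAt.hasDerivAt
    simp only [id, one_mul, zero_mul, add_zero, hφ0] at hg
    exact hg.deriv
end

section
/- Let M(z) = b/(cz+d) with b, c ≠ 0. The finite fixed points of St_M(z) = z + ((cz+d)² - bc)²/(c(cz+d)³) are exactly z = (-d ± √(bc))/c, each a root of multiplicity 2 of the fixed-point equation; none of them is a zero of M (M has no zeroes), so all finite fixed points of St_M are extraneous with multiplier 1. -/
/-! Away from the pole, `St z = z` exactly when `(cz + d)² = bc = s²`, i.e. `cz + d = ±s`. The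
derivative `2c(cz + d) = ±2cs` of `(cX + d)² - bc` does not vanish there since `bc ≠ 0`, so both
roots are simple and become double roots of the square. The correction term of `St` is the square
of a function vanishing at the fixed point over a nonvanishing denominator, so `St' = 1` there. -/

open Polynomial

theorem add_div_eq_self_iff {K : Type*} [DivisionRing K] {x y w : K} (hw : w ≠ 0) :
    x + y / w = x ↔ y = 0 := by
  rw [add_eq_left, div_eq_zero_iff, or_iff_left hw]

theorem Polynomial.rootMultiplicity_pow {R : Type*} [CommRing R] [IsDomain R] (p : R[X]) (n : ℕ)
    (t : R) : (p ^ n).rootMultiplicity t = n * p.rootMultiplicity t := by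
  rcases eq_or_ne p 0 with rfl | hp
  · cases n <;> simp
  induction n with
  | zero => simp
  | succ n ih => rw [pow_succ, rootMultiplicity_mul (mul_ne_zero (pow_ne_zero _ hp) hp), ih]; ring

theorem Polynomial.rootMultiplicity_eq_one_of_isRoot_of_not_isRoot_derivative {R : Type*}
    [CommRing R] {p : R[X]} {t : R} (hp : p.IsRoot t) (hp' : ¬ (derivative p).IsRoot t) :
    p.rootMultiplicity t = 1 := by
  have hp0 : p ≠ 0 := by rintro rfl; simp at hp'
  have hpos : 0 < p.rootMultiplicity t := (rootMultiplicity_pos hp0).2 hp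
  have hle : ¬ 1 < p.rootMultiplicity t := by
    rw [one_lt_rootMultiplicity_iff_isRoot hp0]; exact fun h => hp' h.2
  omega

section AffineSquare

variable {K : Type*} [Field K] {c d e s : K}

theorem mul_neg_add_div_add (hc : c ≠ 0) : c * ((-d + s) / c) + d = s := by
  field_simp; ring

theorem affine_sq_eq_iff (hc : c ≠ 0) (hs : s ^ 2 = e) {z : K} :
    (c * z + d) ^ 2 = e ↔ z = (-d + s) / c ∨ z = (-d - s) / c := by
  rw [← hs, sq_eq_sq_iff_eq_or_eq_neg, eq_div_iff hc, eq_div_iff hc]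
  constructor <;> rintro (h | h) <;> [left; right; left; right] <;> linear_combination h

theorem rootMultiplicity_affine_sq_sub [NeZero (2 : K)] (hc : c ≠ 0) (hs0 : s ≠ 0)
    (hs : s ^ 2 = e) : ((C c * X + C d) ^ 2 - C e).rootMultiplicity ((-d + s) / c) = 1 := by
  apply rootMultiplicity_eq_one_of_isRoot_of_not_isRoot_derivative
  · simp [mul_neg_add_div_add hc, hs]
  · simp [derivative_pow, mul_neg_add_div_add hc, hs0, hc, two_ne_zero]

end AffineSquare

-- `N ^ 2 / D` vanishes to second order at a zero of `N`.
theorem hasDerivAt_add_sq_div_of_eq_zero {𝕜 : Type*} [NontriviallyNormedField 𝕜] {N D : 𝕜 → 𝕜}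
    {z : 𝕜} (hN : DifferentiableAt 𝕜 N z) (hD : DifferentiableAt 𝕜 D z) (hNz : N z = 0)
    (hDz : D z ≠ 0) : HasDerivAt (fun w => w + N w ^ 2 / D w) 1 z :=
  ((hasDerivAt_id z).add ((hN.hasDerivAt.pow 2).div hD.hasDerivAt hDz)).congr_deriv
    (by simp [hNz])

/-- For `M z = b/(cz+d)` with `b, c ≠ 0` and `s` a square root of `bc`,
the finite fixed points of `St_M z = z + ((cz+d)² - bc)²/(c(cz+d)³)` are
exactly `z = (-d ± s)/c`, each of multiplicity 2 in the fixed-point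
equation; none is a zero of `M`, and all have multiplier `1`. -/
theorem stirling_mobius_a_zero_fixed_points (b c d : ℂ) (hb : b ≠ 0)
    (hc : c ≠ 0) (s : ℂ) (hs : s ^ 2 = b * c) :
    let M : ℂ → ℂ := fun z => b / (c * z + d)
    let St : ℂ → ℂ := fun z =>
      z + ((c * z + d) ^ 2 - b * c) ^ 2 / (c * (c * z + d) ^ 3)
    (∀ z : ℂ, c * z + d ≠ 0 →
        (St z = z ↔ (z = (-d + s) / c ∨ z = (-d - s) / c))) ∧
      (((C c * X + C d) ^ 2 - C (b * c)) ^ 2).rootMultiplicity ((-d + s) / c)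
        = 2 ∧
      (((C c * X + C d) ^ 2 - C (b * c)) ^ 2).rootMultiplicity ((-d - s) / c)
        = 2 ∧
      (∀ z : ℂ, c * z + d ≠ 0 → St z = z → (M z ≠ 0 ∧ deriv St z = 1)) := by
  intro M St
  have hs0 : s ≠ 0 := by
    rintro rfl
    exact mul_ne_zero hb hc (by simpa using hs.symm)
  have hden {z : ℂ} (hz : c * z + d ≠ 0) : c * (c * z + d) ^ 3 ≠ 0 :=
    mul_ne_zero hc (pow_ne_zero 3 hz)
  have hfix {z : ℂ} (hz : c * z + d ≠ 0) : St z = z ↔ (c * z + d) ^ 2 - b * c = 0 := by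
    rw [add_div_eq_self_iff (hden hz), sq_eq_zero_iff]
  have hmult_neg := rootMultiplicity_affine_sq_sub (d := d) hc (neg_ne_zero.2 hs0) (neg_sq s ▸ hs)
  rw [← sub_eq_add_neg] at hmult_neg
  refine ⟨fun z hz => ?_, ?_, ?_, fun z hz hz' => ⟨div_ne_zero hb hz, ?_⟩⟩
  · rw [hfix hz, sub_eq_zero, affine_sq_eq_iff hc hs]
  · rw [rootMultiplicity_pow, rootMultiplicity_affine_sq_sub hc hs0 hs]
  · rw [rootMultiplicity_pow, hmult_neg]
  · exact (hasDerivAt_add_sq_div_of_eq_zero (N := fun w => (c * w + d) ^ 2 - b * c)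
      (D := fun w => c * (c * w + d) ^ 3) (by fun_prop) (by fun_prop) ((hfix hz).1 hz')
      (hden hz)).deriv
end

section
/- Let M(z) = (az+b)/(cz+d) with a, c ≠ 0, ad - bc ≠ 0, and let g(z) = 1/St_M(1/z). Then g has a zero of order at least 2 at 0: g(0) = 0 and g'(0) = 0; i.e., ∞ is a superattracting fixed point of St_M. -/
/-!
Substituting `z ↦ 1/z` and clearing denominators turns `1 / St_M (1/z)` into
`z² (ad - bc) (c + dz)³ / B(z)` for a polynomial `B` with `B(0) = -a c⁴ ≠ 0`, so near `0` it
is `z²` times a function analytic at `0`.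
-/

open Filter Topology

section StirlingMobius

variable {𝕜 : Type*} [NontriviallyNormedField 𝕜]

theorem hasDerivAt_mobius (a b c d x : 𝕜) (hx : c * x + d ≠ 0) :
    HasDerivAt (fun z => (a * z + b) / (c * z + d)) ((a * d - b * c) / (c * x + d) ^ 2) x := by
  have hnum : HasDerivAt (fun z => a * z + b) a x := by
    simpa using ((hasDerivAt_id x).const_mul a).add_const b
  have hden : HasDerivAt (fun z => c * z + d) c x := by
    simpa using ((hasDerivAt_id x).const_mul c).add_const d
  exact (hnum.fun_div hden hx).congr_deriv (by ring)

/-- The numerator of `c * (1/z - M (1/z)) + d` over the denominator `z * (c + d * z)`. -/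
def stirlingMobiusQuad (a b c d z : 𝕜) : 𝕜 :=
  c ^ 2 + (2 * c * d - a * c) * z + (d ^ 2 - b * c) * z ^ 2

def stirlingMobiusDenom (a b c d z : 𝕜) : 𝕜 :=
  (a * d - b * c) * z * (c + d * z) ^ 3 - (a + b * z) * stirlingMobiusQuad a b c d z ^ 2

theorem stirlingMobiusDenom_zero (a b c d : 𝕜) :
    stirlingMobiusDenom a b c d 0 = -(a * c ^ 4) := by
  simp only [stirlingMobiusDenom, stirlingMobiusQuad]
  ring

theorem stirling_mobius_one_div (a b c d z : 𝕜) (hdet : a * d - b * c ≠ 0) (hz : z ≠ 0)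
    (hQ : c + d * z ≠ 0) (hR : stirlingMobiusQuad a b c d z ≠ 0) :
    let M : 𝕜 → 𝕜 := fun z => (a * z + b) / (c * z + d)
    1 / z - M (1 / z) / deriv M (1 / z - M (1 / z)) =
      stirlingMobiusDenom a b c d z / ((a * d - b * c) * z ^ 2 * (c + d * z) ^ 3) := by
  intro M
  have hQ' : c + z * d ≠ 0 := by rwa [mul_comm]
  have hM : M (1 / z) = (a + b * z) / (c + d * z) := by
    simp only [M]
    field_simp
  have hpole :
      c * (1 / z - M (1 / z)) + d = stirlingMobiusQuad a b c d z / (z * (c + d * z)) := by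
    rw [hM, stirlingMobiusQuad]
    field_simp
    ring
  rw [(hasDerivAt_mobius a b c d _ (hpole ▸ div_ne_zero hR (mul_ne_zero hz hQ))).deriv, hpole, hM,
    stirlingMobiusDenom]
  field_simp

theorem eventually_ne_zero_stirling_mobius {a b c d : 𝕜} (hc : c ≠ 0) :
    ∀ᶠ z in 𝓝[≠] (0 : 𝕜), z ≠ 0 ∧ c + d * z ≠ 0 ∧ stirlingMobiusQuad a b c d z ≠ 0 := by
  have hQ : ∀ᶠ z in 𝓝 (0 : 𝕜), c + d * z ≠ 0 :=
    (by fun_prop : Continuous fun z : 𝕜 => c + d * z).continuousAt.eventually_ne (by simpa)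
  have hR : ∀ᶠ z in 𝓝 (0 : 𝕜), stirlingMobiusQuad a b c d z ≠ 0 := by
    refine ContinuousAt.eventually_ne ?_ (by simpa [stirlingMobiusQuad])
    unfold stirlingMobiusQuad
    fun_prop
  filter_upwards [self_mem_nhdsWithin, nhdsWithin_le_nhds (hQ.and hR)] with z hz hQR
  exact ⟨hz, hQR⟩

theorem analyticAt_div_stirlingMobiusDenom {a b c d : 𝕜} (ha : a ≠ 0) (hc : c ≠ 0) :
    AnalyticAt 𝕜
      (fun z => (a * d - b * c) * (c + d * z) ^ 3 / stirlingMobiusDenom a b c d z) 0 := by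
  have hB : stirlingMobiusDenom a b c d 0 ≠ 0 := by
    rw [stirlingMobiusDenom_zero]
    exact neg_ne_zero.mpr (mul_ne_zero ha (pow_ne_zero 4 hc))
  have hB_analytic : AnalyticAt 𝕜 (stirlingMobiusDenom a b c d) 0 := by
    unfold stirlingMobiusDenom stirlingMobiusQuad
    fun_prop
  exact (by fun_prop : AnalyticAt 𝕜 (fun z : 𝕜 => (a * d - b * c) * (c + d * z) ^ 3) 0).div
    hB_analytic hB

theorem deriv_sq_mul_zero {h : 𝕜 → 𝕜} (hh : DifferentiableAt 𝕜 h 0) :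
    deriv (fun z => z ^ 2 * h z) 0 = 0 := by
  simp [deriv_fun_mul (differentiableAt_pow 2) hh]

end StirlingMobius

/-- For `M z = (az+b)/(cz+d)` with `a, c ≠ 0`, `ad - bc ≠ 0`, the point `∞`
is a superattracting fixed point of Stirling's method: the conjugation
`g z = 1/St_M(1/z)` extends analytically through `0` with `g 0 = 0` and
`g' 0 = 0`. -/
theorem stirling_mobius_general_infinity_superattracting (a b c d : ℂ)
    (ha : a ≠ 0) (hc : c ≠ 0) (hdet : a * d - b * c ≠ 0) :
    let M : ℂ → ℂ := fun z => (a * z + b) / (c * z + d)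
    let St : ℂ → ℂ := fun z => z - M z / deriv M (z - M z)
    ∃ g : ℂ → ℂ, AnalyticAt ℂ g 0 ∧
      g =ᶠ[nhdsWithin 0 {(0 : ℂ)}ᶜ] (fun z => 1 / St (1 / z)) ∧
      g 0 = 0 ∧ deriv g 0 = 0 := by
  intro M St
  have h_analytic := analyticAt_div_stirlingMobiusDenom (b := b) (d := d) ha hc
  refine ⟨fun z => z ^ 2 * ((a * d - b * c) * (c + d * z) ^ 3 / stirlingMobiusDenom a b c d z),
    (analyticAt_id.pow 2).mul h_analytic, ?_, by simp,
    deriv_sq_mul_zero h_analytic.differentiableAt⟩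
  filter_upwards [eventually_ne_zero_stirling_mobius (a := a) (b := b) (d := d) hc]
    with z ⟨hz, hQ, hR⟩
  dsimp only [St]
  rw [stirling_mobius_one_div a b c d z hdet hz hQ hR, one_div_div]
  ring
end

section
/- For M(z) = z/(z+1) (i.e., a = c = d = 1, b = 0), Stirling's method equals St_M(z) = z²(1 - z² - z³)/(z+1)³; z = 0 is a superattracting fixed point (St_M(0) = 0, St_M'(0) = 0), and the points z = (-1 ± i√3)/2 are fixed points of St_M with multiplier 1. -/
/-!
The derivative of `M z = z / (z + 1)` equals `((w + 1) ^ 2)⁻¹` at every `w`, even at the pole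
`w = -1`, where both sides are Lean's junk value `0`. So `St_M z = z - M z * (z - M z + 1) ^ 2`
with no case distinction, and `z - M z + 1 = (z ^ 2 + z + 1) / (z + 1)` turns this into the stated
rational function. At a root `ω` of `z ^ 2 + z + 1`, such as `(-1 ± i√3)/2`, reducing `St_M` and
its derivative modulo `ω ^ 2 + ω + 1` gives `St_M ω = ω` and `St_M' ω = 1`.
-/

open Filter Topology

section StirlingMethod

variable {𝕜 : Type*} [NontriviallyNormedField 𝕜]

noncomputable def stirlingMethod (M : 𝕜 → 𝕜) (z : 𝕜) : 𝕜 :=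
  z - M z / deriv M (z - M z)

theorem not_continuousAt_div_add_one : ¬ ContinuousAt (fun z : 𝕜 => z / (z + 1)) (-1) := by
  intro h
  have hid : (fun z : 𝕜 => z / (z + 1) * (z + 1)) =ᶠ[𝓝[≠] (-1)] id := by
    filter_upwards [self_mem_nhdsWithin] with z hz
    exact div_mul_cancel₀ z fun h => hz (eq_neg_of_add_eq_zero_left h)
  have hcont : ContinuousAt (fun z : 𝕜 => z / (z + 1) * (z + 1)) (-1) :=
    h.mul (by fun_prop)
  have := (hcont.eventuallyEq_nhds_iff_eventuallyEq_nhdsNE continuousAt_id).1 hid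
  simpa using this.eq_of_nhds

theorem deriv_div_add_one (w : 𝕜) : deriv (fun z : 𝕜 => z / (z + 1)) w = ((w + 1) ^ 2)⁻¹ := by
  rcases eq_or_ne (w + 1) 0 with hw | hw
  · rw [eq_neg_of_add_eq_zero_left hw,
      deriv_zero_of_not_differentiableAt fun h => not_continuousAt_div_add_one h.continuousAt]
    simp
  · rw [((hasDerivAt_id' w).fun_div ((hasDerivAt_id' w).add_const 1) hw).deriv]
    field_simp
    ring

theorem stirlingMethod_div_add_one {z : 𝕜} (hz : z + 1 ≠ 0) :
    stirlingMethod (fun z : 𝕜 => z / (z + 1)) z = z ^ 2 * (1 - z ^ 2 - z ^ 3) / (z + 1) ^ 3 := by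
  rw [stirlingMethod, deriv_div_add_one, div_inv_eq_mul]
  field_simp
  ring

theorem hasDerivAt_stirlingMethod_div_add_one {x : 𝕜} (hx : x + 1 ≠ 0) :
    HasDerivAt (stirlingMethod fun z : 𝕜 => z / (z + 1))
      ((2 * x - x ^ 2 - 4 * x ^ 3 - 6 * x ^ 4 - 2 * x ^ 5) / (x + 1) ^ 4) x := by
  have hR : HasDerivAt (fun z : 𝕜 => (z ^ 2 - z ^ 4 - z ^ 5) / (z + 1) ^ 3)
      (((2 * x - 4 * x ^ 3 - 5 * x ^ 4) * (x + 1) ^ 3 - (x ^ 2 - x ^ 4 - x ^ 5) * (3 * (x + 1) ^ 2))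
        / ((x + 1) ^ 3) ^ 2) x := by
    refine HasDerivAt.div ?_ ?_ (pow_ne_zero 3 hx)
    · exact (((hasDerivAt_pow 2 x).fun_sub (hasDerivAt_pow 4 x)).fun_sub
        (hasDerivAt_pow 5 x)).congr_deriv (by norm_num)
    · simpa using ((hasDerivAt_id' x).add_const (1 : 𝕜)).fun_pow 3
  have heq : (stirlingMethod fun z : 𝕜 => z / (z + 1)) =ᶠ[𝓝 x]
      fun z => (z ^ 2 - z ^ 4 - z ^ 5) / (z + 1) ^ 3 := by
    filter_upwards [(continuous_add_const (1 : 𝕜)).continuousAt.eventually_ne hx] with z hz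
    rw [stirlingMethod_div_add_one hz]
    ring
  refine (hR.congr_of_eventuallyEq heq).congr_deriv ?_
  field_simp
  ring

theorem stirlingMethod_div_add_one_of_sq_add_self_add_one_eq_zero {ω : 𝕜}
    (hω : ω ^ 2 + ω + 1 = 0) :
    stirlingMethod (fun z : 𝕜 => z / (z + 1)) ω = ω ∧
      deriv (stirlingMethod fun z : 𝕜 => z / (z + 1)) ω = 1 := by
  have hω1 : ω + 1 ≠ 0 := fun h => by
    simp [eq_neg_of_add_eq_zero_left h] at hω
  rw [stirlingMethod_div_add_one hω1, (hasDerivAt_stirlingMethod_div_add_one hω1).deriv,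
    div_eq_iff (pow_ne_zero 3 hω1), div_eq_one_iff_eq (pow_ne_zero 4 hω1)]
  exact ⟨by linear_combination (-ω - ω ^ 2 - ω ^ 3) * hω,
    by linear_combination (-1 - ω - 5 * ω ^ 2 - 2 * ω ^ 3) * hω⟩

end StirlingMethod

theorem sq_add_self_add_one_eq_zero_of_sq_eq_neg_three {s : ℂ} (hs : s ^ 2 = -3) :
    ((-1 + s) / 2) ^ 2 + (-1 + s) / 2 + 1 = 0 := by
  linear_combination hs / 4

/-- For `M z = z/(z+1)`, Stirling's method equals
`St_M z = z²(1 - z² - z³)/(z+1)³`; `z = 0` is a superattracting fixed point,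
and `z = (-1 ± i√3)/2` are fixed points of multiplier `1`. -/
theorem stirling_mobius_example :
    let M : ℂ → ℂ := fun z => z / (z + 1)
    let St : ℂ → ℂ := fun z => z - M z / deriv M (z - M z)
    let p : ℂ := (-1 + Complex.I * (Real.sqrt 3 : ℂ)) / 2
    let q : ℂ := (-1 - Complex.I * (Real.sqrt 3 : ℂ)) / 2
    (∀ z : ℂ, z + 1 ≠ 0 →
        St z = z ^ 2 * (1 - z ^ 2 - z ^ 3) / (z + 1) ^ 3) ∧
      St 0 = 0 ∧ deriv St 0 = 0 ∧
      St p = p ∧ deriv St p = 1 ∧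
      St q = q ∧ deriv St q = 1 := by
  intro M St p q
  have hs : (Complex.I * (Real.sqrt 3 : ℂ)) ^ 2 = -3 := by
    rw [mul_pow, Complex.I_sq, ← Complex.ofReal_pow, Real.sq_sqrt zero_le_three]
    push_cast
    ring
  obtain ⟨hp, hp'⟩ := stirlingMethod_div_add_one_of_sq_add_self_add_one_eq_zero
    (sq_add_self_add_one_eq_zero_of_sq_eq_neg_three hs)
  obtain ⟨hq, hq'⟩ := stirlingMethod_div_add_one_of_sq_add_self_add_one_eq_zero
    (sq_add_self_add_one_eq_zero_of_sq_eq_neg_three (s := -(Complex.I * (Real.sqrt 3 : ℂ)))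
      (by rw [neg_sq, hs]))
  rw [← sub_eq_add_neg] at hq hq'
  refine ⟨fun z => stirlingMethod_div_add_one, ?_, ?_, hp, hp', hq, hq'⟩
  · exact (stirlingMethod_div_add_one (z := (0 : ℂ)) (by norm_num)).trans (by norm_num)
  · exact (hasDerivAt_stirlingMethod_div_add_one (x := (0 : ℂ)) (by norm_num)).deriv.trans
      (by norm_num)
end
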